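/- Let H be a factorial commutative cancellative monoid and M a submonoid of H containing every unit of H. Then every element of M that is square-free in M is square-free in H, if and only if, for every n ≥ 1 and square-free elements s₁,…,sₙ ∈ H that are pairwise relatively prime in H, s₁·s₂²·s₃³·⋯·sₙⁿ ∈ M implies s₁,…,sₙ ∈ M. -/

import Mathlib

/-!
Write `S e = ∏ i, s i ^ e i` for a pairwise relatively prime family of square-free elements.
In a factorial monoid a representation `a = b ^ 2 * c` with `c` square-free determines `b` and
`c` up to units. If every element of `M` that is square-free in `M` is square-free in `H`, then
squares can be split off inside `M` until the remaining factor is square-free, so by uniqueness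
`S e ∈ M` forces `S (e / 2) ∈ M` and `S (e % 2) ∈ M`, because `S e = S (e / 2) ^ 2 * S (e % 2)`.
Hence the exponent vectors `e` with `S e ∈ M` are closed under addition, halving and reduction
mod 2. Starting from `e i = i`, these operations produce the indicator of every set of indices
cut out by conditions on the binary digits of `i`, in particular of every single index.

Conversely, peeling off radicals writes every `a` as `s₁ s₂² ⋯ sₙⁿ`. If all `sᵢ` lie in `M`, then
`a = (∏ sᵢ ^ (i / 2)) ^ 2 * ∏ sᵢ ^ (i % 2)` is a decomposition inside `M`, so if `a` is square-free
in `M` the first factor is a unit and `a` is associated to the square-free second factor.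
-/

open Function

section

variable {H : Type*}

-- Mathlib's `Prime` lives in a `MonoidWithZero`; this is the same notion in a monoid without zero.
def IsPrimeElement [CommMonoid H] (p : H) : Prop :=
  ¬IsUnit p ∧ ∀ b c : H, p ∣ b * c → p ∣ b ∨ p ∣ c

class IsFactorialMonoid (H : Type*) [CommMonoid H] : Prop where
  isUnit_or_exists_prod_eq : ∀ a : H,
    IsUnit a ∨ ∃ l : Multiset H, (∀ p ∈ l, IsPrimeElement p) ∧ l.prod = a

def SquarefreeIn [CommMonoid H] (M : Submonoid H) (a : H) : Prop :=
  ¬∃ b c : H, b ∈ M ∧ c ∈ M ∧ ¬IsUnit b ∧ a = b ^ 2 * c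

theorem Submonoid.mem_of_associated [CommMonoid H] {M : Submonoid H}
    (hunits : ∀ u : H, IsUnit u → u ∈ M) {x y : H} (hx : x ∈ M) (h : Associated x y) : y ∈ M := by
  obtain ⟨u, rfl⟩ := h
  exact M.mul_mem hx (hunits _ u.isUnit)

theorem prod_pow_eq_sq_mul [CommMonoid H] {ι : Type*} [Fintype ι] (s : ι → H) (e : ι → ℕ) :
    ∏ i, s i ^ e i = (∏ i, s i ^ (e i / 2)) ^ 2 * ∏ i, s i ^ (e i % 2) := by
  rw [← Finset.prod_pow, ← Finset.prod_mul_distrib]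
  refine Finset.prod_congr rfl fun i _ ↦ ?_
  rw [← pow_mul, ← pow_add, mul_comm, Nat.div_add_mod]

theorem not_mul_dvd_of_not_isUnit [CancelCommMonoid H] {b : H} (hb : ¬IsUnit b) (c : H) :
    ¬b * c ∣ c := by
  intro h
  rw [mul_comm, ← mul_one c, mul_assoc, one_mul] at h
  exact hb (isUnit_of_dvd_one ((IsLeftRegular.all c).dvd_cancel_left.mp h))

section DecompositionMonoid

variable [CommMonoid H] [DecompositionMonoid H]

theorem Squarefree.mul_of_isRelPrime {x y : H} (hxy : IsRelPrime x y) (hx : Squarefree x)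
    (hy : Squarefree y) : Squarefree (x * y) := by
  intro d hd
  obtain ⟨d₁, d₂, h₁, h₂, rfl⟩ := exists_dvd_and_dvd_of_dvd_mul ((dvd_mul_right d d).trans hd)
  have h₁₁ : d₁ * d₁ ∣ x * y := (mul_dvd_mul (dvd_mul_right _ _) (dvd_mul_right _ _)).trans hd
  have h₂₂ : d₂ * d₂ ∣ x * y := (mul_dvd_mul (dvd_mul_left _ _) (dvd_mul_left _ _)).trans hd
  have hd₁ := hxy.of_dvd_left h₁
  have hd₂ := hxy.symm.of_dvd_left h₂
  exact (hx d₁ ((hd₁.mul_left hd₁).dvd_of_dvd_mul_right h₁₁)).mul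
    (hy d₂ ((hd₂.mul_left hd₂).dvd_of_dvd_mul_left h₂₂))

theorem Finset.squarefree_prod_of_pairwise_isRelPrime {ι : Type*} {t : Finset ι} {f : ι → H}
    (hpair : (t : Set ι).Pairwise (IsRelPrime on f)) (hsq : ∀ i ∈ t, Squarefree (f i)) :
    Squarefree (∏ i ∈ t, f i) := by
  classical
  induction t using Finset.induction_on with
  | empty => simp
  | insert a t hat ih =>
    rw [Finset.coe_insert, Set.pairwise_insert] at hpair
    rw [Finset.prod_insert hat]
    refine .mul_of_isRelPrime (.prod_right fun i hi ↦ ?_) (hsq a (by simp))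
      (ih hpair.1 fun i hi ↦ hsq i (by simp [hi]))
    exact (hpair.2 i hi fun h ↦ hat (h ▸ hi)).1

variable {ι : Type*} [Fintype ι]

theorem squarefree_prod_pow_mod_two {s : ι → H} (hs : ∀ i, Squarefree (s i))
    (hpair : Pairwise (IsRelPrime on s)) (e : ι → ℕ) : Squarefree (∏ i, s i ^ (e i % 2)) := by
  refine Finset.squarefree_prod_of_pairwise_isRelPrime
    (fun i _ j _ hij ↦ (hpair hij).pow) fun i _ ↦ ?_
  rcases Nat.mod_two_eq_zero_or_one (e i) with h | h <;> simp [h, hs i]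

theorem squarefree_of_squarefreeIn {M : Submonoid H} {s : ι → H} (hs : ∀ i, Squarefree (s i))
    (hpair : Pairwise (IsRelPrime on s)) (hsM : ∀ i, s i ∈ M) {e : ι → ℕ}
    (h : SquarefreeIn M (∏ i, s i ^ e i)) : Squarefree (∏ i, s i ^ e i) := by
  have hmem : ∀ k : ι → ℕ, ∏ i, s i ^ k i ∈ M := fun k ↦
    M.prod_mem fun i _ ↦ M.pow_mem (hsM i) _
  have hunit : IsUnit (∏ i, s i ^ (e i / 2)) := by
    by_contra hu
    exact h ⟨_, _, hmem _, hmem _, hu, prod_pow_eq_sq_mul s e⟩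
  rw [prod_pow_eq_sq_mul]
  exact (associated_unit_mul_left _ _ (hunit.pow 2)).symm.squarefree_iff.mp
    (squarefree_prod_pow_mod_two hs hpair e)

end DecompositionMonoid

namespace IsPrimeElement

variable [CancelCommMonoid H] {p : H}

theorem isRelPrime_of_not_dvd (hp : IsPrimeElement p) {x : H} (h : ¬p ∣ x) : IsRelPrime p x := by
  intro d ⟨e, hde⟩ hdx
  rcases hp.2 d e (hde ▸ dvd_rfl) with hpd | ⟨f, rfl⟩
  · exact absurd (hpd.trans hdx) h
  · refine .of_mul_eq_one f (mul_left_cancel (a := p) ?_)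
    rw [mul_one, mul_left_comm, ← hde]

theorem squarefree (hp : IsPrimeElement p) : Squarefree p := by
  intro x hx
  by_cases hpx : p ∣ x
  · have : x * x ∣ x * 1 := by rw [mul_one]; exact hx.trans hpx
    exact isUnit_of_dvd_one ((IsLeftRegular.all x).dvd_cancel_left.mp this)
  · exact hp.isRelPrime_of_not_dvd hpx ((dvd_mul_right x x).trans hx) dvd_rfl

end IsPrimeElement

namespace IsFactorialMonoid

variable [CancelCommMonoid H] [IsFactorialMonoid H]

theorem induction_on {P : H → Prop} (unit : ∀ u : H, IsUnit u → P u)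
    (prime_mul : ∀ p a : H, IsPrimeElement p → P a → P (p * a)) (a : H) : P a := by
  rcases isUnit_or_exists_prod_eq a with ha | ⟨l, hl, rfl⟩
  · exact unit a ha
  induction l using Multiset.induction_on with
  | empty => exact unit _ isUnit_one
  | cons p l ih =>
    rw [Multiset.prod_cons]
    exact prime_mul p _ (hl p (Multiset.mem_cons_self p l))
      (ih fun q hq ↦ hl q (Multiset.mem_cons_of_mem hq))

theorem exists_prime_dvd {a : H} (ha : ¬IsUnit a) : ∃ p, IsPrimeElement p ∧ p ∣ a := by
  induction a using induction_on with
  | unit u hu => exact absurd hu ha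
  | prime_mul p a hp _ => exact ⟨p, hp, dvd_mul_right p a⟩

instance : DecompositionMonoid H where
  primal := by
    intro a
    induction a using induction_on with
    | unit u hu => exact hu.isPrimal
    | prime_mul p a hp ha =>
      intro b c h
      rcases hp.2 b c ((dvd_mul_right p a).trans h) with ⟨b, rfl⟩ | ⟨c, rfl⟩
      · rw [mul_assoc] at h
        obtain ⟨a₁, a₂, h₁, h₂, rfl⟩ := ha ((IsLeftRegular.all p).dvd_cancel_left.mp h)
        exact ⟨p * a₁, a₂, mul_dvd_mul_left p h₁, h₂, (mul_assoc _ _ _).symm⟩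
      · rw [mul_left_comm] at h
        obtain ⟨a₁, a₂, h₁, h₂, rfl⟩ := ha ((IsLeftRegular.all p).dvd_cancel_left.mp h)
        exact ⟨a₁, p * a₂, h₁, mul_dvd_mul_left p h₂, mul_left_comm _ _ _⟩

theorem wellFounded_strictDvd : WellFounded (fun a b : H ↦ a ∣ b ∧ ¬b ∣ a) := by
  suffices h : ∀ a b : H, b ∣ a → Acc (fun a b : H ↦ a ∣ b ∧ ¬b ∣ a) b from
    ⟨fun b ↦ h b b dvd_rfl⟩
  intro a
  induction a using induction_on with
  | unit u hu => exact fun b hb ↦ ⟨b, fun c hc ↦ absurd (isUnit_of_dvd_unit hb hu).dvd hc.2⟩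
  | prime_mul p a hp ih =>
    -- An element strictly below `p * b` either divides `b` or is `p` times one strictly below `b`.
    have hmul : ∀ b, Acc (fun a b : H ↦ a ∣ b ∧ ¬b ∣ a) b → b ∣ a →
        Acc (fun a b : H ↦ a ∣ b ∧ ¬b ∣ a) (p * b) := by
      intro b hb
      induction hb with
      | intro b _ ihb =>
        intro hba
        refine ⟨_, fun c ⟨hc, hnc⟩ ↦ ?_⟩
        by_cases hpc : p ∣ c
        · obtain ⟨c, rfl⟩ := hpc
          have hcb := (IsLeftRegular.all p).dvd_cancel_left.mp hc
          exact ihb c ⟨hcb, fun h ↦ hnc (mul_dvd_mul_left p h)⟩ (hcb.trans hba)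
        · exact ih c (((hp.isRelPrime_of_not_dvd hpc).symm.dvd_of_dvd_mul_left hc).trans hba)
    intro b hb
    by_cases hpb : p ∣ b
    · obtain ⟨b, rfl⟩ := hpb
      have hba := (IsLeftRegular.all p).dvd_cancel_left.mp hb
      exact hmul b (ih b hba) hba
    · exact ih b ((hp.isRelPrime_of_not_dvd hpb).symm.dvd_of_dvd_mul_left hb)

theorem strictDvd_induction {P : H → Prop} (ih : ∀ a, (∀ b, b ∣ a → ¬a ∣ b → P b) → P a)
    (a : H) : P a :=
  wellFounded_strictDvd.induction a fun a h ↦ ih a fun b hb hab ↦ h b ⟨hb, hab⟩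

theorem exists_radical (a : H) :
    ∃ r, Squarefree r ∧ r ∣ a ∧ ∀ x, Squarefree x → x ∣ a → x ∣ r := by
  induction a using induction_on with
  | unit u hu => exact ⟨1, squarefree_one, one_dvd u, fun x _ hx ↦ (isUnit_of_dvd_unit hx hu).dvd⟩
  | prime_mul p a hp ih =>
    obtain ⟨r, hr, hra, hmax⟩ := ih
    by_cases hpr : p ∣ r
    · refine ⟨r, hr, hra.trans (dvd_mul_left a p), fun x hx hxpa ↦ ?_⟩
      obtain ⟨x₁, x₂, h₁, h₂, rfl⟩ := exists_dvd_and_dvd_of_dvd_mul hxpa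
      exact (IsRelPrime.of_squarefree_mul hx).mul_dvd (h₁.trans hpr)
        (hmax x₂ hx.of_mul_right h₂)
    · refine ⟨p * r, .mul_of_isRelPrime (hp.isRelPrime_of_not_dvd hpr) hp.squarefree hr,
        mul_dvd_mul_left p hra, fun x hx hxpa ↦ ?_⟩
      obtain ⟨x₁, x₂, h₁, h₂, rfl⟩ := exists_dvd_and_dvd_of_dvd_mul hxpa
      exact mul_dvd_mul h₁ (hmax x₂ hx.of_mul_right h₂)

theorem exists_squarefree_decomposition (a : H) :
    ∃ (n : ℕ) (s : Fin (n + 1) → H), (∀ i, Squarefree (s i)) ∧ Pairwise (IsRelPrime on s) ∧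
      ∏ i, s i ^ (i.val + 1) = a := by
  induction a using strictDvd_induction with
  | ih a ih =>
  by_cases ha : IsUnit a
  · exact ⟨0, fun _ ↦ a, fun _ ↦ ha.squarefree, Subsingleton.pairwise (α := Fin 1), by simp⟩
  obtain ⟨r, hr, ⟨a, rfl⟩, hmax⟩ := exists_radical a
  have hr_unit : ¬IsUnit r := by
    obtain ⟨p, hp, hpa⟩ := exists_prime_dvd ha
    exact fun hu ↦ hp.1 (isUnit_of_dvd_unit (hmax p hp.squarefree hpa) hu)
  obtain ⟨n, t, ht, htpair, rfl⟩ := ih _ (dvd_mul_left _ _) (not_mul_dvd_of_not_isUnit hr_unit _)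
  have hT : Squarefree (∏ i, t i) :=
    Finset.squarefree_prod_of_pairwise_isRelPrime (htpair.set_pairwise _) fun i _ ↦ ht i
  obtain ⟨s₀, hs₀⟩ : ∏ i, t i ∣ r := hmax _ hT <| dvd_mul_of_dvd_right
    (Finset.prod_dvd_prod_of_dvd _ _ fun i _ ↦ dvd_pow_self _ i.val.succ_ne_zero) r
  rw [hs₀] at hr
  have hs₀t : ∀ i, IsRelPrime s₀ (t i) := fun i ↦
    (IsRelPrime.of_squarefree_mul hr).symm.of_dvd_right (Finset.dvd_prod_of_mem t (by simp))
  refine ⟨n + 1, Fin.cons s₀ t, fun i ↦ ?_, fun i j hij ↦ ?_, ?_⟩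
  · cases i using Fin.cases with
    | zero => exact hr.of_mul_right
    | succ i => exact ht i
  · cases i using Fin.cases <;> cases j using Fin.cases
    · exact absurd rfl hij
    · exact hs₀t _
    · exact (hs₀t _).symm
    · exact htpair (fun h ↦ hij (congrArg Fin.succ h))
  · rw [Fin.prod_univ_succ, Fin.cons_zero, Fin.val_zero, zero_add, pow_one, hs₀]
    simp only [Fin.cons_succ, Fin.val_succ, pow_succ _ (_ + 1), Finset.prod_mul_distrib]
    ac_rfl

theorem associated_of_sq_mul_eq {b c b' c' : H} (hc : Squarefree c) (hc' : Squarefree c')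
    (h : b ^ 2 * c = b' ^ 2 * c') : Associated b b' ∧ Associated c c' := by
  induction b using induction_on generalizing b' with
  | unit u hu =>
    have hb'c : b' * b' ∣ u ^ 2 * c := by rw [h, ← sq]; exact dvd_mul_right _ _
    have hb' : IsUnit b' := hc b' ((hu.pow 2).dvd_mul_left.mp hb'c)
    refine ⟨(associated_one_iff_isUnit.mpr hu).trans (associated_one_iff_isUnit.mpr hb').symm, ?_⟩
    exact (associated_unit_mul_left c _ (hu.pow 2)).symm.trans
        (h ▸ associated_unit_mul_left c' _ (hb'.pow 2))
  | prime_mul p b hp ih =>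
    have hpb' : p ∣ b' := by
      by_contra hpb'
      have hpp : p ^ 2 ∣ b' ^ 2 * c' := h ▸ ⟨b ^ 2 * c, by rw [mul_pow, mul_assoc]⟩
      exact hp.1 (hc' p (sq p ▸ ((hp.isRelPrime_of_not_dvd hpb').pow.dvd_of_dvd_mul_left hpp)))
    obtain ⟨b', rfl⟩ := hpb'
    rw [mul_pow, mul_pow, mul_assoc, mul_assoc] at h
    obtain ⟨hb, hc⟩ := ih (mul_left_cancel h)
    exact ⟨hb.mul_left p, hc⟩

theorem exists_sq_mul_squarefree_of_mem {M : Submonoid H}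
    (hM : ∀ a ∈ M, SquarefreeIn M a → Squarefree a) {a : H} (ha : a ∈ M) :
    ∃ b c, b ∈ M ∧ c ∈ M ∧ Squarefree c ∧ a = b ^ 2 * c := by
  induction a using strictDvd_induction with
  | ih a ih =>
  by_cases hsq : SquarefreeIn M a
  · exact ⟨1, a, M.one_mem, ha, hM a ha hsq, by rw [one_pow, one_mul]⟩
  obtain ⟨b, c, hb, hc, hbu, rfl⟩ := not_not.mp hsq
  have hb2 : ¬IsUnit (b ^ 2) := fun h ↦ hbu (isUnit_pow_succ_iff.mp h)
  obtain ⟨b', c', hb', hc', hsq', rfl⟩ :=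
    ih c (dvd_mul_left _ _) (not_mul_dvd_of_not_isUnit hb2 _) hc
  exact ⟨b * b', c', M.mul_mem hb hb', hc', hsq', by rw [mul_pow, mul_assoc]⟩

end IsFactorialMonoid

structure IsHalvingClosed {ι : Type*} (K : Set (ι → ℕ)) : Prop where
  add_mem : ∀ e ∈ K, ∀ e' ∈ K, e + e' ∈ K
  half_mem : ∀ e ∈ K, (fun i ↦ e i / 2) ∈ K
  mod_two_mem : ∀ e ∈ K, (fun i ↦ e i % 2) ∈ K

namespace IsHalvingClosed

variable {ι : Type*} {K : Set (ι → ℕ)} (hK : IsHalvingClosed K)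
include hK

theorem inter_mem {S T : Set ι} (hS : S.indicator 1 ∈ K) (hT : T.indicator 1 ∈ K) :
    (S ∩ T).indicator 1 ∈ K := by
  convert hK.half_mem _ (hK.add_mem _ hS _ hT) using 1
  funext j
  by_cases j ∈ S <;> by_cases j ∈ T <;> simp [*]

theorem diff_mem {S T : Set ι} (hS : S.indicator 1 ∈ K) (hT : T.indicator 1 ∈ K) :
    (S \ T).indicator 1 ∈ K := by
  convert hK.mod_two_mem _ (hK.add_mem _ hS _ (hK.inter_mem hS hT)) using 1
  funext j
  by_cases j ∈ S <;> by_cases j ∈ T <;> simp [*]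

theorem testBit_mem {f : ι → ℕ} (hf : f ∈ K) (k : ℕ) :
    {j | (f j).testBit k}.indicator 1 ∈ K := by
  have hdiv : ∀ k, (fun j ↦ f j / 2 ^ k) ∈ K := by
    intro k
    induction k with
    | zero => simpa using hf
    | succ k ih => simpa [pow_succ, Nat.div_div_eq_div_mul] using hK.half_mem _ ih
  convert hK.mod_two_mem _ (hdiv k) using 1
  funext j
  rcases Nat.mod_two_eq_zero_or_one (f j / 2 ^ k) with h | h <;>
    simp [Nat.testBit_eq_decide_div_mod_eq, h]

theorem indicator_singleton_mem [Finite ι] {f : ι → ℕ} (hf : f ∈ K) {i : ι} (hi : f i ≠ 0)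
    (hinj : ∀ j, f j = f i → j = i) : ({i} : Set ι).indicator 1 ∈ K := by
  obtain ⟨k₀, hk₀⟩ := Nat.exists_testBit_of_ne_zero hi
  -- Refine the set of indices with bit `k₀` set by agreement with `f i` on the first `N` bits.
  have hagree : ∀ N, {j | (f j).testBit k₀ ∧ ∀ k < N, (f j).testBit k = (f i).testBit k}.indicator 1
      ∈ K := by
    intro N
    induction N with
    | zero => simpa using hK.testBit_mem hf k₀
    | succ N ih =>
      cases hb : (f i).testBit N
      · convert hK.diff_mem ih (hK.testBit_mem hf N) using 2
        ext j
        simp only [Set.mem_ofPred_eq, Set.mem_sdiff, Nat.forall_lt_succ_right, hb, and_assoc,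
          Bool.not_eq_true]
      · convert hK.inter_mem ih (hK.testBit_mem hf N) using 2
        ext j
        simp only [Set.mem_ofPred_eq, Set.mem_inter_iff, Nat.forall_lt_succ_right, hb, and_assoc]
  obtain ⟨B, hB⟩ := (Set.finite_range f).bddAbove
  have hlt : ∀ j, f j < 2 ^ B := fun j ↦ (hB ⟨j, rfl⟩).trans_lt Nat.lt_two_pow_self
  convert hagree B using 2
  ext j
  refine ⟨fun hj ↦ ?_, fun ⟨_, hj⟩ ↦ hinj j (Nat.eq_of_testBit_eq fun k ↦ ?_)⟩
  · rw [Set.mem_singleton_iff.mp hj]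
    exact ⟨hk₀, fun _ _ ↦ rfl⟩
  · by_cases hk : k < B
    · exact hj k hk
    · have hpow : 2 ^ B ≤ 2 ^ k := Nat.pow_le_pow_right two_pos (not_lt.mp hk)
      rw [Nat.testBit_eq_false_of_lt ((hlt j).trans_le hpow),
        Nat.testBit_eq_false_of_lt ((hlt i).trans_le hpow)]

end IsHalvingClosed

section Submonoid

variable [CancelCommMonoid H] [IsFactorialMonoid H] {M : Submonoid H}
  {ι : Type*} [Fintype ι] {s : ι → H}

theorem isHalvingClosed_setOf_prod_pow_mem (hM : ∀ a ∈ M, SquarefreeIn M a → Squarefree a)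
    (hunits : ∀ u : H, IsUnit u → u ∈ M) (hs : ∀ i, Squarefree (s i))
    (hpair : Pairwise (IsRelPrime on s)) : IsHalvingClosed {e : ι → ℕ | ∏ i, s i ^ e i ∈ M} := by
  refine ⟨fun e he e' he' ↦ ?_, fun e he ↦ ?_, fun e he ↦ ?_⟩ <;> simp only [Set.mem_ofPred_eq] at *
  · simpa only [Pi.add_apply, pow_add, Finset.prod_mul_distrib] using M.mul_mem he he'
  all_goals
    obtain ⟨b, c, hb, hc, hcsq, hbc⟩ := IsFactorialMonoid.exists_sq_mul_squarefree_of_mem hM he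
    obtain ⟨hb', hc'⟩ := IsFactorialMonoid.associated_of_sq_mul_eq hcsq
      (squarefree_prod_pow_mod_two hs hpair e) (hbc.symm.trans (prod_pow_eq_sq_mul s e))
  · exact Submonoid.mem_of_associated hunits hb hb'
  · exact Submonoid.mem_of_associated hunits hc hc'

theorem mem_of_prod_pow_mem (hM : ∀ a ∈ M, SquarefreeIn M a → Squarefree a)
    (hunits : ∀ u : H, IsUnit u → u ∈ M) (hs : ∀ i, Squarefree (s i))
    (hpair : Pairwise (IsRelPrime on s)) {f : ι → ℕ} (hf : Injective f) (hf0 : ∀ i, f i ≠ 0)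
    (hmem : ∏ i, s i ^ f i ∈ M) (i : ι) : s i ∈ M := by
  classical
  have := (isHalvingClosed_setOf_prod_pow_mem hM hunits hs hpair).indicator_singleton_mem hmem
    (hf0 i) fun j h ↦ hf h
  simpa [Pi.single_apply, pow_ite] using this

end Submonoid

end

theorem stmt_11 {H : Type*} [CancelCommMonoid H]
    (hfact : ∀ a : H, IsUnit a ∨ ∃ l : Multiset H, (∀ p ∈ l, ¬ IsUnit p ∧ ∀ b c : H, p ∣ b * c → p ∣ b ∨ p ∣ c) ∧ l.prod = a)
    (M : Submonoid H) (hunits : ∀ u : H, IsUnit u → u ∈ M) :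
    (∀ a ∈ M, (¬ ∃ b c : H, b ∈ M ∧ c ∈ M ∧ ¬ IsUnit b ∧ a = b ^ 2 * c) →
      Squarefree a) ↔
    (∀ n : ℕ, 1 ≤ n → ∀ s : Fin n → H, (∀ i, Squarefree (s i)) →
      (∀ i j, i ≠ j → IsRelPrime (s i) (s j)) →
      (∏ i, (s i) ^ (i.val + 1)) ∈ M → ∀ i, s i ∈ M) := by
  have : IsFactorialMonoid H := ⟨hfact⟩
  constructor
  · intro hM n _ s hs hpair hmem
    exact mem_of_prod_pow_mem hM hunits hs (fun i j ↦ hpair i j)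
      (fun i j h ↦ Fin.ext (Nat.succ_injective h)) (fun i ↦ i.val.succ_ne_zero) hmem
  · intro hR a ha hsq
    obtain ⟨n, s, hs, hpair, rfl⟩ := IsFactorialMonoid.exists_squarefree_decomposition a
    exact squarefree_of_squarefreeIn hs hpair
      (hR (n + 1) n.succ_pos s hs (fun i j ↦ @hpair i j) ha) hsq
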